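/- Let S be a cryptogroup and N a full normal subcryptogroup of S. Define the relation ρ_N on S by: a ρ_N b if and only if a⁻¹*b ∈ N and a⁰ = b⁰. Then ρ_N is a congruence on S (an equivalence relation such that a ρ_N b implies a*c ρ_N b*c and c*a ρ_N c*b for all c ∈ S), and the quotient semigroup S/ρ_N is a cryptogroup: it is completely regular and Green's relation ℋ on S/ρ_N is a congruence. -/

import Mathlib

open Set TopologicalSpace

/-- The principal left ideal (with `a` adjoined) generated by `a`: `{a} ∪ {s*a : s ∈ S}`. -/
def leftIdeal {S : Type*} [Semigroup S] (a : S) : Set S :=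
  insert a {x | ∃ s, x = s * a}

/-- The principal right ideal (with `a` adjoined) generated by `a`: `{a} ∪ {a*s : s ∈ S}`. -/
def rightIdeal {S : Type*} [Semigroup S] (a : S) : Set S :=
  insert a {x | ∃ s, x = a * s}

/-- Green's relation ℋ on a semigroup. -/
def greenH {S : Type*} [Semigroup S] (a b : S) : Prop :=
  leftIdeal a = leftIdeal b ∧ rightIdeal a = rightIdeal b

/-- The ℋ-class of an element. -/
def HClass {S : Type*} [Semigroup S] (x : S) : Set S := {y | greenH y x}

/-- A semigroup is completely regular if every element is completely regular. -/
def CompletelyRegularSemigroup (S : Type*) [Semigroup S] : Prop :=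
  ∀ a : S, ∃ x, a = a * x * a ∧ a * x = x * a

/-- Green's relation ℋ is a congruence. -/
def HIsCongruence (S : Type*) [Semigroup S] : Prop :=
  ∀ a b c : S, greenH a b → greenH (a * c) (b * c) ∧ greenH (c * a) (c * b)

/-- A cryptogroup is a completely regular semigroup in which ℋ is a congruence. -/
def IsCryptogroup (S : Type*) [Semigroup S] : Prop :=
  CompletelyRegularSemigroup S ∧ HIsCongruence S

/-- In a cryptogroup every ℋ-class is a group; `idp x` (written `x⁰`) is the identity of the
ℋ-class of `x`, and `inv x` (written `x⁻¹`) is the inverse of `x` inside its ℋ-class. -/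
structure CryptoOps (S : Type*) [Semigroup S] where
  idp : S → S
  inv : S → S
  idp_mem : ∀ x, greenH (idp x) x
  idp_mul : ∀ x y, greenH y x → idp x * y = y
  mul_idp : ∀ x y, greenH y x → y * idp x = y
  inv_mem : ∀ x, greenH (inv x) x
  mul_inv : ∀ x, x * inv x = idp x
  inv_mul : ∀ x, inv x * x = idp x

/-- The set `E(S)` of idempotents of a semigroup. -/
def idemSet (S : Type*) [Semigroup S] : Set S := {e | e * e = e}

/-- `(xU)* = {y ∈ S : x⁻¹*y ∈ U and x⁰ = y⁰}`. -/
def lstar {S : Type*} [Semigroup S] (ops : CryptoOps S) (x : S) (U : Set S) : Set S :=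
  {y | ops.inv x * y ∈ U ∧ ops.idp x = ops.idp y}

/-- `(Ux)* = {y ∈ S : y*x⁻¹ ∈ U and x⁰ = y⁰}`. -/
def rstar {S : Type*} [Semigroup S] (ops : CryptoOps S) (U : Set S) (x : S) : Set S :=
  {y | y * ops.inv x ∈ U ∧ ops.idp x = ops.idp y}

/-- `(AB)* = ⋃_{a ∈ A} (aB)*`. -/
def setStar {S : Type*} [Semigroup S] (ops : CryptoOps S) (A B : Set S) : Set S :=
  ⋃ a ∈ A, lstar ops a B

/-- A full subcryptogroup: contains all idempotents, and closed under multiplication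
and inversion. -/
def IsFullSubcryptogroup {S : Type*} [Semigroup S] (ops : CryptoOps S) (K : Set S) : Prop :=
  idemSet S ⊆ K ∧ (∀ x ∈ K, ∀ y ∈ K, x * y ∈ K) ∧ (∀ x ∈ K, ops.inv x ∈ K)

/-!
Since `a⁰ = b⁰` means that `a` and `b` lie in the same group `H_a`, on each ℋ-class `ρ_N` is
the left coset relation of the subgroup `N ∩ H_a`, and `b = a * (a⁻¹ * b)`; reflexivity, symmetry
and transitivity come from `N` containing `E(S)` and being closed under inverses and products.
For compatibility, `(c * a)⁻¹ * (c * b) = (c * a)⁰ * (a⁻¹ * b)`, while `(a * c)⁻¹ * (b * c)` is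
the double conjugate `(a * c)⁻¹ * (a * n * a⁻¹) * (a * c)` of `n = a⁻¹ * b`. Finally `ρ_N ⊆ ℋ`,
and a congruence contained in `ℋ` does not change ℋ-classes, so ℋ remains a congruence on the
quotient; complete regularity passes to any quotient.
-/

section Green

variable {S : Type*} [Semigroup S]

theorem greenH.refl (a : S) : greenH a a := ⟨rfl, rfl⟩

theorem greenH.symm {a b : S} (h : greenH a b) : greenH b a := ⟨h.1.symm, h.2.symm⟩

theorem greenH.trans {a b c : S} (h₁ : greenH a b) (h₂ : greenH b c) : greenH a c :=
  ⟨h₁.1.trans h₂.1, h₁.2.trans h₂.2⟩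

theorem mem_leftIdeal_self (a : S) : a ∈ leftIdeal a := mem_insert _ _

theorem mem_rightIdeal_self (a : S) : a ∈ rightIdeal a := mem_insert _ _

theorem mul_mem_leftIdeal (s a : S) : s * a ∈ leftIdeal a := Or.inr ⟨s, rfl⟩

theorem mul_mem_rightIdeal (a s : S) : a * s ∈ rightIdeal a := Or.inr ⟨s, rfl⟩

theorem leftIdeal_subset_of_mem {a b : S} (h : a ∈ leftIdeal b) : leftIdeal a ⊆ leftIdeal b := by
  rcases h with rfl | ⟨s, rfl⟩
  · exact subset_rfl
  · rintro x (rfl | ⟨t, rfl⟩)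
    · exact mul_mem_leftIdeal s b
    · exact Or.inr ⟨t * s, (mul_assoc t s b).symm⟩

theorem rightIdeal_subset_of_mem {a b : S} (h : a ∈ rightIdeal b) :
    rightIdeal a ⊆ rightIdeal b := by
  rcases h with rfl | ⟨s, rfl⟩
  · exact subset_rfl
  · rintro x (rfl | ⟨t, rfl⟩)
    · exact mul_mem_rightIdeal b s
    · exact Or.inr ⟨s * t, mul_assoc b s t⟩

theorem leftIdeal_eq_iff {a b : S} :
    leftIdeal a = leftIdeal b ↔ a ∈ leftIdeal b ∧ b ∈ leftIdeal a :=
  ⟨fun h => ⟨h ▸ mem_leftIdeal_self a, h ▸ mem_leftIdeal_self b⟩,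
    fun h => (leftIdeal_subset_of_mem h.1).antisymm (leftIdeal_subset_of_mem h.2)⟩

theorem rightIdeal_eq_iff {a b : S} :
    rightIdeal a = rightIdeal b ↔ a ∈ rightIdeal b ∧ b ∈ rightIdeal a :=
  ⟨fun h => ⟨h ▸ mem_rightIdeal_self a, h ▸ mem_rightIdeal_self b⟩,
    fun h => (rightIdeal_subset_of_mem h.1).antisymm (rightIdeal_subset_of_mem h.2)⟩

theorem greenH_iff_mem {a b : S} :
    greenH a b ↔ (a ∈ leftIdeal b ∧ b ∈ leftIdeal a) ∧ (a ∈ rightIdeal b ∧ b ∈ rightIdeal a) :=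
  and_congr leftIdeal_eq_iff rightIdeal_eq_iff

end Green

section Quotient

variable {S : Type*} [Semigroup S] (c : Con S)

theorem Con.coe_mem_leftIdeal_iff (hc : ∀ a b, c a b → greenH a b) {a b : S} :
    (a : c.Quotient) ∈ leftIdeal (b : c.Quotient) ↔ a ∈ leftIdeal b := by
  constructor
  · rintro (h | ⟨q, h⟩)
    · exact (hc a b (c.eq.1 h)).1 ▸ mem_leftIdeal_self a
    · induction q using Con.induction_on with | H s => ?_
      rw [← Con.coe_mul, c.eq] at h
      exact leftIdeal_subset_of_mem (mul_mem_leftIdeal s b) ((hc _ _ h).1 ▸ mem_leftIdeal_self a)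
  · rintro (rfl | ⟨s, rfl⟩)
    · exact mem_leftIdeal_self _
    · exact Or.inr ⟨s, Con.coe_mul s b⟩

theorem Con.coe_mem_rightIdeal_iff (hc : ∀ a b, c a b → greenH a b) {a b : S} :
    (a : c.Quotient) ∈ rightIdeal (b : c.Quotient) ↔ a ∈ rightIdeal b := by
  constructor
  · rintro (h | ⟨q, h⟩)
    · exact (hc a b (c.eq.1 h)).2 ▸ mem_rightIdeal_self a
    · induction q using Con.induction_on with | H s => ?_
      rw [← Con.coe_mul, c.eq] at h
      exact rightIdeal_subset_of_mem (mul_mem_rightIdeal b s) ((hc _ _ h).2 ▸ mem_rightIdeal_self a)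
  · rintro (rfl | ⟨s, rfl⟩)
    · exact mem_rightIdeal_self _
    · exact Or.inr ⟨s, Con.coe_mul b s⟩

theorem Con.coe_greenH_iff (hc : ∀ a b, c a b → greenH a b) {a b : S} :
    greenH (a : c.Quotient) (b : c.Quotient) ↔ greenH a b := by
  simp only [greenH_iff_mem, c.coe_mem_leftIdeal_iff hc, c.coe_mem_rightIdeal_iff hc]

theorem CompletelyRegularSemigroup.quotient (h : CompletelyRegularSemigroup S) :
    CompletelyRegularSemigroup c.Quotient := by
  intro q
  induction q using Con.induction_on with | H a => ?_
  obtain ⟨x, hax, hcomm⟩ := h a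
  refine ⟨x, ?_, ?_⟩ <;> simp only [← Con.coe_mul]
  · rw [← hax]
  · rw [hcomm]

theorem HIsCongruence.quotient (h : HIsCongruence S) (hc : ∀ a b, c a b → greenH a b) :
    HIsCongruence c.Quotient := by
  intro qa qb qd
  induction qa using Con.induction_on with | H a => ?_
  induction qb using Con.induction_on with | H b => ?_
  induction qd using Con.induction_on with | H d => ?_
  simp only [← Con.coe_mul, c.coe_greenH_iff hc]
  exact h a b d

end Quotient

namespace CryptoOps

variable {S : Type*} [Semigroup S]

theorem greenH_mul (ops : CryptoOps S) (hcong : HIsCongruence S) {a x y : S}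
    (hx : greenH x a) (hy : greenH y a) : greenH (x * y) a := by
  have he : greenH (ops.idp a) a := ops.idp_mem a
  have hxy : greenH (x * y) (ops.idp a * y) := (hcong x _ y (hx.trans he.symm)).1
  have hy' : greenH (ops.idp a * y) (ops.idp a * ops.idp a) := (hcong y _ _ (hy.trans he.symm)).2
  rw [ops.idp_mul _ _ he] at hy'
  exact hxy.trans (hy'.trans he)

variable (ops : CryptoOps S)

theorem idp_mul_idp (x : S) : ops.idp x * ops.idp x = ops.idp x :=
  ops.idp_mul x _ (ops.idp_mem x)

theorem idp_eq_idp_iff {a b : S} : ops.idp a = ops.idp b ↔ greenH a b := by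
  refine ⟨fun h => (ops.idp_mem a).symm.trans (h ▸ ops.idp_mem b), fun h => ?_⟩
  calc ops.idp a = ops.idp a * ops.idp b := (ops.mul_idp b _ ((ops.idp_mem a).trans h)).symm
    _ = ops.idp b := ops.idp_mul a _ ((ops.idp_mem b).trans h.symm)

theorem mul_inv_mul_cancel {a b : S} (h : ops.idp a = ops.idp b) : a * (ops.inv a * b) = b := by
  rw [← mul_assoc, ops.mul_inv, h, ops.idp_mul b b (greenH.refl b)]

theorem eq_inv_of_mul_eq_idp {x y : S} (hy : greenH y x) (h : y * x = ops.idp x) :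
    y = ops.inv x :=
  calc y = y * (x * ops.inv x) := by rw [ops.mul_inv, ops.mul_idp x y hy]
    _ = ops.idp x * ops.inv x := by rw [← mul_assoc, h]
    _ = ops.inv x := ops.idp_mul x _ (ops.inv_mem x)

theorem inv_inv (x : S) : ops.inv (ops.inv x) = x := by
  refine (ops.eq_inv_of_mul_eq_idp (ops.inv_mem x).symm ?_).symm
  rw [ops.mul_inv, (ops.idp_eq_idp_iff).2 (ops.inv_mem x)]

theorem inv_mul_greenH (hcong : HIsCongruence S) {a b : S} (h : ops.idp a = ops.idp b) :
    greenH (ops.inv a * b) a :=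
  ops.greenH_mul hcong (ops.inv_mem a) ((ops.idp_eq_idp_iff).1 h).symm

theorem inv_inv_mul (hcong : HIsCongruence S) {a b : S} (h : ops.idp a = ops.idp b) :
    ops.inv (ops.inv a * b) = ops.inv b * a := by
  have hab : greenH (ops.inv a * b) a := ops.inv_mul_greenH hcong h
  have hba : greenH (ops.inv b * a) a :=
    (ops.inv_mul_greenH hcong h.symm).trans ((ops.idp_eq_idp_iff).1 h.symm)
  refine (ops.eq_inv_of_mul_eq_idp (hba.trans hab.symm) ?_).symm
  calc ops.inv b * a * (ops.inv a * b) = ops.inv b * b := by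
        rw [mul_assoc, ops.mul_inv_mul_cancel h]
    _ = ops.idp (ops.inv a * b) := by rw [ops.inv_mul, (ops.idp_eq_idp_iff).2 hab, h]

end CryptoOps

section NormalCongruence

variable {S : Type*} [Semigroup S] (ops : CryptoOps S) {N : Set S}

/-- The relation `ρ_N`. -/
def normalRel (N : Set S) (a b : S) : Prop :=
  ops.inv a * b ∈ N ∧ ops.idp a = ops.idp b

theorem IsFullSubcryptogroup.idp_mem (hN : IsFullSubcryptogroup ops N) (x : S) :
    ops.idp x ∈ N :=
  hN.1 (ops.idp_mul_idp x)

theorem normalRel_refl (hN : IsFullSubcryptogroup ops N) (a : S) : normalRel ops N a a :=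
  ⟨ops.inv_mul a ▸ hN.idp_mem ops a, rfl⟩

theorem normalRel_symm (hcong : HIsCongruence S) (hN : IsFullSubcryptogroup ops N) {a b : S}
    (h : normalRel ops N a b) : normalRel ops N b a :=
  ⟨ops.inv_inv_mul hcong h.2 ▸ hN.2.2 _ h.1, h.2.symm⟩

theorem normalRel_trans (hN : IsFullSubcryptogroup ops N) {a b c : S}
    (hab : normalRel ops N a b) (hbc : normalRel ops N b c) : normalRel ops N a c := by
  refine ⟨?_, hab.2.trans hbc.2⟩
  rw [← ops.mul_inv_mul_cancel hbc.2, ← mul_assoc]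
  exact hN.2.1 _ hab.1 _ hbc.1

theorem normalRel_mul_left (hcong : HIsCongruence S) (hN : IsFullSubcryptogroup ops N)
    {a b : S} (c : S) (h : normalRel ops N a b) : normalRel ops N (c * a) (c * b) := by
  refine ⟨?_, (ops.idp_eq_idp_iff).2 (hcong a b c ((ops.idp_eq_idp_iff).1 h.2)).2⟩
  rw [← ops.mul_inv_mul_cancel h.2, ← mul_assoc c, ← mul_assoc, ops.inv_mul]
  exact hN.2.1 _ (hN.idp_mem ops _) _ h.1

theorem normalRel_mul_right (hcong : HIsCongruence S)
    (hNnormal : ∀ s : S, ∀ n ∈ N, s * n * ops.inv s ∈ N)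
    {a b : S} (c : S) (h : normalRel ops N a b) : normalRel ops N (a * c) (b * c) := by
  refine ⟨?_, (ops.idp_eq_idp_iff).2 (hcong a b c ((ops.idp_eq_idp_iff).1 h.2)).1⟩
  set n := ops.inv a * b
  have hn : n * ops.idp a = n := ops.mul_idp a n (ops.inv_mul_greenH hcong h.2)
  have hconj : a * n * ops.inv a * (a * c) = b * c := by
    rw [mul_assoc (a * n), ← mul_assoc (ops.inv a), ops.inv_mul, ← mul_assoc, mul_assoc a n, hn,
      ops.mul_inv_mul_cancel h.2]
  have hmem := hNnormal (ops.inv (a * c)) _ (hNnormal a n h.1)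
  rwa [ops.inv_inv, mul_assoc, hconj] at hmem

def normalCon (hcong : HIsCongruence S) (hN : IsFullSubcryptogroup ops N)
    (hNnormal : ∀ s : S, ∀ n ∈ N, s * n * ops.inv s ∈ N) : Con S where
  r := normalRel ops N
  iseqv := ⟨normalRel_refl ops hN, normalRel_symm ops hcong hN, normalRel_trans ops hN⟩
  mul' h₁ h₂ := normalRel_trans ops hN (normalRel_mul_right ops hcong hNnormal _ h₁)
    (normalRel_mul_left ops hcong hN _ h₂)

theorem normalCon_le_greenH (hcong : HIsCongruence S) (hN : IsFullSubcryptogroup ops N)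
    (hNnormal : ∀ s : S, ∀ n ∈ N, s * n * ops.inv s ∈ N) (a b : S)
    (h : normalCon ops hcong hN hNnormal a b) : greenH a b :=
  (ops.idp_eq_idp_iff).1 h.2

end NormalCongruence

/-- For a full normal subcryptogroup `N` of a cryptogroup `S`, the relation
`a ρ_N b ↔ a⁻¹*b ∈ N ∧ a⁰ = b⁰` is a congruence on `S`, and the quotient semigroup
`S/ρ_N` is a cryptogroup (completely regular with ℋ a congruence). -/
theorem stmt19 {S : Type*} [Semigroup S] (ops : CryptoOps S)
    (hcrypt : IsCryptogroup S) (N : Set S)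
    (hN : IsFullSubcryptogroup ops N)
    (hNnormal : ∀ s : S, ∀ n ∈ N, s * n * ops.inv s ∈ N) :
    ∃ c : Con S,
      (∀ a b : S, c a b ↔ (ops.inv a * b ∈ N ∧ ops.idp a = ops.idp b)) ∧
      CompletelyRegularSemigroup c.Quotient ∧ HIsCongruence c.Quotient := by
  obtain ⟨hreg, hcong⟩ := hcrypt
  let c := normalCon ops hcong hN hNnormal
  exact ⟨c, fun _ _ => Iff.rfl, hreg.quotient c,
    hcong.quotient c (normalCon_le_greenH ops hcong hN hNnormal)⟩
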